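/- Under the Setup, the log-softmax term of the loss at the true token vanishes in probability in the joint limit β̄ → 0, d → ∞: for every η > 0 and δ > 0 there exist β̄₀ > 0 and d₀ ∈ ℕ such that for all β̄ ∈ (0, β̄₀) and all d ≥ d₀, the probability that log( 1 + Σ_{i ≠ y} exp( ⟪z_t, e_i⟫ − ⟪z_t, e_y⟫ ) ) < η is greater than 1 − δ. -/

import Mathlib

/-!
Write `a = √(1 - β̄)` and `b = √β̄`. For a wrong token `i ≠ y` the exponent
`⟪z_t, e_i - e_y⟫` is the sum over coordinates `j` of the pairwise independent terms
`(a e_{y,j} + b ε_j) (e_{i,j} - e_{y,j})`, each of mean `-a σ_e²` and of variance bounded,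
uniformly in `β̄`, by fourth Gaussian moments. Hence the exponent has mean `-a σ_e² d`, which
tends to `-∞` because `a ≥ 1/2` for `β̄ ≤ 3/4`, while its variance is `O(d)`.
Chebyshev's inequality and a union bound over the `V - 1` wrong tokens put every exponent below
`log ((e^η - 1) / V)` with probability `1 - O(1/d)`, and then the log-softmax term is below `η`.
-/

open MeasureTheory ProbabilityTheory Finset

/-- Euclidean inner product on `ℝ^d` (as functions `Fin d → ℝ`). -/
noncomputable def edot {d : ℕ} (u v : Fin d → ℝ) : ℝ := ∑ j, u j * v j

/-- The noised embedding `z_t = √(1−β̄)·z₀ + √β̄·ε`. -/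
noncomputable def noised {d : ℕ} (βb : ℝ) (z0 ε : Fin d → ℝ) : Fin d → ℝ :=
  fun j => Real.sqrt (1 - βb) * z0 j + Real.sqrt βb * ε j

open Filter
open scoped NNReal ENNReal Topology

section Chebyshev

variable {Ω : Type*} {mΩ : MeasurableSpace Ω} {μ : Measure Ω}

lemma measure_ge_le_variance_div_sq_of_integral_add_le [IsFiniteMeasure μ] {X : Ω → ℝ}
    (hX : MemLp X 2 μ) {c t : ℝ} (ht : 0 < t) (hc : μ[X] + t ≤ c) :
    μ {ω | c ≤ X ω} ≤ ENNReal.ofReal (Var[X; μ] / t ^ 2) :=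
  (measure_mono fun ω (hω : c ≤ X ω) => show t ≤ |X ω - μ[X]| from
    le_abs.2 (Or.inl (by linarith))).trans (meas_ge_le_variance_div_sq hX ht)

lemma variance_sum_le_of_pairwise_indepFun {ι : Type*} [Fintype ι] {X : ι → Ω → ℝ}
    (hX : ∀ i, MemLp (X i) 2 μ) (hind : Pairwise fun i j => IndepFun (X i) (X j) μ)
    {K : ℝ} (hK : ∀ i, Var[X i; μ] ≤ K) :
    Var[fun ω => ∑ i, X i ω; μ] ≤ Fintype.card ι * K := by
  rw [← Finset.sum_fn, IndepFun.variance_sum (fun i _ => hX i) fun i _ j _ hij => hind hij]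
  simpa using Finset.sum_le_sum fun i (_ : i ∈ univ) => hK i

lemma ofReal_one_sub_lt_of_measure_compl_le [IsProbabilityMeasure μ] {s : Set Ω} {r δ : ℝ}
    (hr : 0 ≤ r) (hrδ : r < min δ 1) (hs : μ sᶜ ≤ ENNReal.ofReal r) :
    ENNReal.ofReal (1 - δ) < μ s := by
  have hδ := min_le_left δ 1
  have h1 := min_le_right δ 1
  calc ENNReal.ofReal (1 - δ) < ENNReal.ofReal (1 - r) :=
        (ENNReal.ofReal_lt_ofReal_iff (by linarith)).2 (by linarith)
    _ = 1 - ENNReal.ofReal r := by rw [ENNReal.ofReal_sub _ hr, ENNReal.ofReal_one]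
    _ ≤ μ Set.univ - μ sᶜ := by rw [measure_univ]; exact tsub_le_tsub_left hs 1
    _ ≤ μ s := by simpa using le_measure_sdiff (μ := μ) (s₁ := Set.univ) (s₂ := sᶜ)

end Chebyshev

lemma log_one_add_sum_exp_lt {ι : Type*} {s : Finset ι} {n : ℕ} (hs : #s < n) {η : ℝ}
    (hη : 0 < η) {x : ι → ℝ} (hx : ∀ i ∈ s, x i < Real.log ((Real.exp η - 1) / n)) :
    Real.log (1 + ∑ i ∈ s, Real.exp (x i)) < η := by
  have hn : (0 : ℝ) < n := by exact_mod_cast (Nat.zero_le _).trans_lt hs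
  have hq : 0 < (Real.exp η - 1) / n := div_pos (by linarith [Real.add_one_lt_exp hη.ne']) hn
  have hsum : ∑ i ∈ s, Real.exp (x i) < Real.exp η - 1 :=
    calc ∑ i ∈ s, Real.exp (x i) ≤ #s * ((Real.exp η - 1) / n) := by
          simpa using Finset.sum_le_sum fun i hi => ((Real.lt_log_iff_exp_lt hq).1 (hx i hi)).le
      _ < n * ((Real.exp η - 1) / n) := mul_lt_mul_of_pos_right (by exact_mod_cast hs) hq
      _ = Real.exp η - 1 := mul_div_cancel₀ _ hn.ne'
  rw [Real.log_lt_iff_lt_exp (by positivity)]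
  linarith

lemma edot_noised_sub_edot {d : ℕ} (βb : ℝ) (z ξ u : Fin d → ℝ) :
    edot (noised βb z ξ) u - edot (noised βb z ξ) z
      = ∑ j, (Real.sqrt (1 - βb) * z j + Real.sqrt βb * ξ j) * (u j - z j) := by
  simp only [edot, noised, ← sum_sub_distrib, mul_sub]

-- Only its finiteness matters: the value `3 v²` is never needed.
noncomputable def gaussianFourthMoment (v : ℝ≥0) : ℝ := ∫ x, x ^ 4 ∂gaussianReal 0 v

lemma gaussianFourthMoment_nonneg (v : ℝ≥0) : 0 ≤ gaussianFourthMoment v :=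
  integral_nonneg fun x => by positivity

section GaussianMoments

variable {Ω : Type*} {mΩ : MeasurableSpace Ω} {P : Measure Ω} {X : Ω → ℝ} {v : ℝ≥0}

lemma ProbabilityTheory.HasLaw.integral_eq_zero_of_gaussianReal
    (hX : HasLaw X (gaussianReal 0 v) P) : P[X] = 0 := by
  rw [hX.integral_eq, integral_id_gaussianReal]

lemma ProbabilityTheory.HasLaw.integral_sq_of_gaussianReal (hX : HasLaw X (gaussianReal 0 v) P) :
    ∫ ω, X ω ^ 2 ∂P = v := by
  have := hX.isProbabilityMeasure
  have h := variance_eq_sub hX.hasGaussianLaw.memLp_two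
  rw [hX.variance_eq, variance_id_gaussianReal, hX.integral_eq_zero_of_gaussianReal] at h
  simpa using h.symm

lemma ProbabilityTheory.HasLaw.integrable_pow_four_of_gaussianReal {m : ℝ}
    (hX : HasLaw X (gaussianReal m v) P) : Integrable (fun ω => X ω ^ 4) P := by
  simpa [Real.norm_eq_abs, Even.pow_abs ⟨2, rfl⟩] using
    (hX.hasGaussianLaw.memLp (p := (4 : ℕ)) (by simp)).integrable_norm_pow (by norm_num)

lemma ProbabilityTheory.HasLaw.integral_pow_four_of_gaussianReal
    (hX : HasLaw X (gaussianReal 0 v) P) : ∫ ω, X ω ^ 4 ∂P = gaussianFourthMoment v :=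
  hX.integral_comp (f := fun x : ℝ => x ^ 4) (by fun_prop)

end GaussianMoments

lemma sq_add_mul_mul_sub_le {a b : ℝ} (ha : |a| ≤ 1) (hb : |b| ≤ 1) (x y z : ℝ) :
    ((a * x + b * z) * (y - x)) ^ 2 ≤ 8 * x ^ 4 + 4 * y ^ 4 + 4 * z ^ 4 := by
  have ha2 : a ^ 2 ≤ 1 := by nlinarith [abs_nonneg a, sq_abs a]
  have hb2 : b ^ 2 ≤ 1 := by nlinarith [abs_nonneg b, sq_abs b]
  have hu : (a * x + b * z) ^ 2 ≤ 2 * (x ^ 2 + z ^ 2) := by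
    nlinarith [sq_nonneg (a * x - b * z), mul_le_mul_of_nonneg_right ha2 (sq_nonneg x),
      mul_le_mul_of_nonneg_right hb2 (sq_nonneg z)]
  have hv : (y - x) ^ 2 ≤ 2 * (x ^ 2 + y ^ 2) := by nlinarith [sq_nonneg (x + y)]
  calc ((a * x + b * z) * (y - x)) ^ 2 = (a * x + b * z) ^ 2 * (y - x) ^ 2 := mul_pow _ _ _
    _ ≤ (2 * (x ^ 2 + z ^ 2)) * (2 * (x ^ 2 + y ^ 2)) :=
        mul_le_mul hu hv (sq_nonneg _) (by positivity)
    _ ≤ 8 * x ^ 4 + 4 * y ^ 4 + 4 * z ^ 4 := by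
        nlinarith [sq_nonneg (x ^ 2 - y ^ 2), sq_nonneg (x ^ 2 - z ^ 2), sq_nonneg (y ^ 2 - z ^ 2)]

section CoordinateTerm

variable {Ω : Type*} {mΩ : MeasurableSpace Ω} {P : Measure Ω} {A B C : Ω → ℝ} {a b : ℝ}

lemma memLp_two_add_mul_mul_sub (hA : AEStronglyMeasurable A P)
    (hB : AEStronglyMeasurable B P) (hC : AEStronglyMeasurable C P)
    (hA4 : Integrable (fun ω => A ω ^ 4) P) (hB4 : Integrable (fun ω => B ω ^ 4) P)
    (hC4 : Integrable (fun ω => C ω ^ 4) P) (ha : |a| ≤ 1) (hb : |b| ≤ 1) :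
    MemLp (fun ω => (a * A ω + b * C ω) * (B ω - A ω)) 2 P := by
  refine (memLp_two_iff_integrable_sq (by fun_prop)).2 <|
    Integrable.mono' (((hA4.const_mul 8).add (hB4.const_mul 4)).add (hC4.const_mul 4))
      (by fun_prop) (ae_of_all _ fun ω => ?_)
  rw [Real.norm_of_nonneg (sq_nonneg _)]
  exact sq_add_mul_mul_sub_le ha hb _ _ _

lemma integral_sq_add_mul_mul_sub_le (hA : AEStronglyMeasurable A P)
    (hB : AEStronglyMeasurable B P) (hC : AEStronglyMeasurable C P)
    (hA4 : Integrable (fun ω => A ω ^ 4) P) (hB4 : Integrable (fun ω => B ω ^ 4) P)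
    (hC4 : Integrable (fun ω => C ω ^ 4) P) (ha : |a| ≤ 1) (hb : |b| ≤ 1) :
    ∫ ω, ((a * A ω + b * C ω) * (B ω - A ω)) ^ 2 ∂P
      ≤ 8 * ∫ ω, A ω ^ 4 ∂P + 4 * ∫ ω, B ω ^ 4 ∂P + 4 * ∫ ω, C ω ^ 4 ∂P := by
  have hAB : Integrable (fun ω => 8 * A ω ^ 4 + 4 * B ω ^ 4) P :=
    (hA4.const_mul 8).add (hB4.const_mul 4)
  calc _ ≤ ∫ ω, 8 * A ω ^ 4 + 4 * B ω ^ 4 + 4 * C ω ^ 4 ∂P :=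
        integral_mono (memLp_two_add_mul_mul_sub hA hB hC hA4 hB4 hC4 ha hb).integrable_sq
          (hAB.add (hC4.const_mul 4)) fun ω => sq_add_mul_mul_sub_le ha hb _ _ _
    _ = _ := by
        rw [integral_add hAB (hC4.const_mul 4), integral_add (hA4.const_mul 8) (hB4.const_mul 4),
          integral_const_mul, integral_const_mul, integral_const_mul]

lemma integral_add_mul_mul_sub (hA : MemLp A 2 P) (hB : MemLp B 2 P) (hC : MemLp C 2 P)
    (hAB : IndepFun A B P) (hCA : IndepFun C A P) (hCB : IndepFun C B P)
    (hA0 : P[A] = 0) (hB0 : P[B] = 0) :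
    ∫ ω, (a * A ω + b * C ω) * (B ω - A ω) ∂P = -(a * ∫ ω, A ω ^ 2 ∂P) := by
  have iAB : Integrable (fun ω => a * (A ω * B ω)) P := (hA.integrable_mul hB).const_mul a
  have iAA : Integrable (fun ω => a * A ω ^ 2) P := hA.integrable_sq.const_mul a
  have iCB : Integrable (fun ω => b * (C ω * B ω)) P := (hC.integrable_mul hB).const_mul b
  have iCA : Integrable (fun ω => b * (C ω * A ω)) P := (hC.integrable_mul hA).const_mul b
  have iA : Integrable (fun ω => a * (A ω * B ω) - a * A ω ^ 2) P := iAB.sub iAA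
  have iC : Integrable (fun ω => b * (C ω * B ω) - b * (C ω * A ω)) P := iCB.sub iCA
  have hexpand : (fun ω => (a * A ω + b * C ω) * (B ω - A ω)) = fun ω =>
      a * (A ω * B ω) - a * A ω ^ 2 + (b * (C ω * B ω) - b * (C ω * A ω)) := by
    funext ω; ring
  rw [hexpand, integral_add iA iC, integral_sub iAB iAA, integral_sub iCB iCA,
    integral_const_mul, integral_const_mul, integral_const_mul, integral_const_mul,
    hAB.integral_fun_mul_eq_mul_integral hA.1 hB.1, hCB.integral_fun_mul_eq_mul_integral hC.1 hB.1,
    hCA.integral_fun_mul_eq_mul_integral hC.1 hA.1, hA0, hB0]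
  ring

lemma moments_add_mul_mul_sub_of_gaussianReal {v w : ℝ≥0}
    (hA : HasLaw A (gaussianReal 0 v) P) (hB : HasLaw B (gaussianReal 0 v) P)
    (hC : HasLaw C (gaussianReal 0 w) P)
    (hAB : IndepFun A B P) (hCA : IndepFun C A P) (hCB : IndepFun C B P)
    (ha : |a| ≤ 1) (hb : |b| ≤ 1) :
    MemLp (fun ω => (a * A ω + b * C ω) * (B ω - A ω)) 2 P ∧
      P[fun ω => (a * A ω + b * C ω) * (B ω - A ω)] = -(a * v) ∧
      Var[fun ω => (a * A ω + b * C ω) * (B ω - A ω); P]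
        ≤ 12 * gaussianFourthMoment v + 4 * gaussianFourthMoment w := by
  have := hA.isProbabilityMeasure
  have hA' := hA.aemeasurable.aestronglyMeasurable
  have hB' := hB.aemeasurable.aestronglyMeasurable
  have hC' := hC.aemeasurable.aestronglyMeasurable
  have hA4 := hA.integrable_pow_four_of_gaussianReal
  have hB4 := hB.integrable_pow_four_of_gaussianReal
  have hC4 := hC.integrable_pow_four_of_gaussianReal
  have hmem := memLp_two_add_mul_mul_sub hA' hB' hC' hA4 hB4 hC4 ha hb
  refine ⟨hmem, ?_, (variance_le_expectation_sq hmem.1).trans ?_⟩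
  · rw [integral_add_mul_mul_sub hA.hasGaussianLaw.memLp_two hB.hasGaussianLaw.memLp_two
      hC.hasGaussianLaw.memLp_two hAB hCA hCB hA.integral_eq_zero_of_gaussianReal
      hB.integral_eq_zero_of_gaussianReal, hA.integral_sq_of_gaussianReal]
  · refine (integral_sq_add_mul_mul_sub_le hA' hB' hC' hA4 hB4 hC4 ha hb).trans_eq ?_
    rw [hA.integral_pow_four_of_gaussianReal, hB.integral_pow_four_of_gaussianReal,
      hC.integral_pow_four_of_gaussianReal]
    ring

end CoordinateTerm

section Model

variable {Ω : Type*} {mΩ : MeasurableSpace Ω} {P : Measure Ω} {V d : ℕ}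
  {e : Fin V → Ω → Fin d → ℝ} {ε : Ω → Fin d → ℝ}

def entryFamily (e : Fin V → Ω → Fin d → ℝ) (ε : Ω → Fin d → ℝ) :
    (Fin V × Fin d) ⊕ Fin d → Ω → ℝ :=
  Sum.elim (fun p ω => e p.1 ω p.2) fun j ω => ε ω j

lemma indepFun_entry_triples (hind : iIndepFun (entryFamily e ε) P)
    (hmeas : ∀ x, AEMeasurable (entryFamily e ε x) P) (y i : Fin V) {j k : Fin d}
    (hjk : j ≠ k) :
    IndepFun (fun ω => (e y ω j, e i ω j, ε ω j))
      (fun ω => (e y ω k, e i ω k, ε ω k)) P := by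
  let S : Fin d → Finset ((Fin V × Fin d) ⊕ Fin d) := fun j =>
    {.inl (y, j), .inl (i, j), .inr j}
  have hS : Disjoint (S j) (S k) := by simp [S, hjk.symm]
  have hmem : ∀ j, .inl (y, j) ∈ S j ∧ .inl (i, j) ∈ S j ∧ .inr j ∈ S j := fun j => by
    simp [S]
  let φ : ∀ j, (S j → ℝ) → ℝ × ℝ × ℝ := fun j g =>
    (g ⟨_, (hmem j).1⟩, g ⟨_, (hmem j).2.1⟩, g ⟨_, (hmem j).2.2⟩)
  have hφ : ∀ j, Measurable (φ j) := fun j => by fun_prop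
  exact (hind.indepFun_finset₀ (S j) (S k) hS hmeas).comp (hφ j) (hφ k)

lemma measure_ge_sum_coordinate_terms_le {v w : ℝ≥0} (hv : 0 < (v : ℝ))
    (hind : iIndepFun (entryFamily e ε) P)
    (he : ∀ k j, HasLaw (fun ω => e k ω j) (gaussianReal 0 v) P)
    (hε : ∀ j, HasLaw (fun ω => ε ω j) (gaussianReal 0 w) P)
    {a b : ℝ} (ha : 1 / 2 ≤ a) (ha1 : a ≤ 1) (hb : |b| ≤ 1) {i y : Fin V} (hiy : i ≠ y)
    (hd : 0 < d) {c : ℝ} (hc : -(v * d / 4) ≤ c) :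
    P {ω | c ≤ ∑ j, (a * e y ω j + b * ε ω j) * (e i ω j - e y ω j)} ≤ ENNReal.ofReal
      (16 * (12 * gaussianFourthMoment v + 4 * gaussianFourthMoment w) / v ^ 2 / d) := by
  set K := 12 * gaussianFourthMoment v + 4 * gaussianFourthMoment w
  set W : Fin d → Ω → ℝ := fun j ω => (a * e y ω j + b * ε ω j) * (e i ω j - e y ω j)
  have := hind.isProbabilityMeasure
  have hmeas : ∀ x, AEMeasurable (entryFamily e ε x) P := by
    rintro (⟨k, j⟩ | j)
    exacts [(he k j).aemeasurable, (hε j).aemeasurable]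
  have hW : ∀ j, MemLp (W j) 2 P ∧ P[W j] = -(a * v) ∧ Var[W j; P] ≤ K := fun j =>
    moments_add_mul_mul_sub_of_gaussianReal (he y j) (he i j) (hε j)
      (hind.indepFun (i := .inl (y, j)) (j := .inl (i, j)) (by simp [hiy.symm]))
      (hind.indepFun (i := .inr j) (j := .inl (y, j)) (by simp))
      (hind.indepFun (i := .inr j) (j := .inl (i, j)) (by simp))
      (abs_le.2 ⟨by linarith, ha1⟩) hb
  have hXmem : MemLp (fun ω => ∑ j, W j ω) 2 P := memLp_finsetSum _ fun j _ => (hW j).1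
  have hXint : P[fun ω => ∑ j, W j ω] = -(a * v * d) := by
    rw [integral_finsetSum _ fun j _ => (hW j).1.integrable one_le_two]
    simp [fun j => (hW j).2.1]
    ring
  have hf : Measurable fun t : ℝ × ℝ × ℝ => (a * t.1 + b * t.2.2) * (t.2.1 - t.1) := by
    fun_prop
  have hXvar : Var[fun ω => ∑ j, W j ω; P] ≤ d * K := by
    simpa using variance_sum_le_of_pairwise_indepFun (fun j => (hW j).1)
      (fun j k hjk => (indepFun_entry_triples hind hmeas y i hjk).comp hf hf) fun j => (hW j).2.2
  have hvd : 0 < (v : ℝ) * d := by positivity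
  calc P {ω | c ≤ ∑ j, W j ω}
      ≤ ENNReal.ofReal (Var[fun ω => ∑ j, W j ω; P] / (v * d / 4) ^ 2) :=
        measure_ge_le_variance_div_sq_of_integral_add_le hXmem (by positivity)
          (by rw [hXint]; nlinarith)
    _ ≤ ENNReal.ofReal (16 * K / v ^ 2 / d) := by
        refine ENNReal.ofReal_le_ofReal <|
          (div_le_div_of_nonneg_right hXvar (by positivity)).trans_eq ?_
        field_simp
        ring

lemma measure_log_one_add_sum_exp_ge_le {v w : ℝ≥0} (hv : 0 < (v : ℝ))
    (hind : iIndepFun (entryFamily e ε) P)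
    (he : ∀ k j, HasLaw (fun ω => e k ω j) (gaussianReal 0 v) P)
    (hε : ∀ j, HasLaw (fun ω => ε ω j) (gaussianReal 0 w) P)
    {βb : ℝ} (hβ0 : 0 ≤ βb) (hβ : βb ≤ 3 / 4) (hd : 0 < d) {η : ℝ} (hη : 0 < η)
    (hc : -(v * d / 4) ≤ Real.log ((Real.exp η - 1) / V)) (y : Fin V) :
    P {ω | Real.log (1 + ∑ i ∈ univ.erase y,
        Real.exp (edot (noised βb (e y ω) (ε ω)) (e i ω)
          - edot (noised βb (e y ω) (ε ω)) (e y ω))) < η}ᶜ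
      ≤ ENNReal.ofReal
        (V * (16 * (12 * gaussianFourthMoment v + 4 * gaussianFourthMoment w) / v ^ 2 / d)) := by
  set c := Real.log ((Real.exp η - 1) / V)
  set X : Fin V → Ω → ℝ := fun i ω =>
    ∑ j, (Real.sqrt (1 - βb) * e y ω j + Real.sqrt βb * ε ω j) * (e i ω j - e y ω j)
  have ha : 1 / 2 ≤ Real.sqrt (1 - βb) := Real.le_sqrt_of_sq_le (by linarith)
  have ha1 : Real.sqrt (1 - βb) ≤ 1 := Real.sqrt_le_one.2 (by linarith)
  have hb : |Real.sqrt βb| ≤ 1 := by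
    rw [abs_of_nonneg (Real.sqrt_nonneg _)]
    exact Real.sqrt_le_one.2 (by linarith)
  calc _ ≤ P (⋃ i ∈ univ.erase y, {ω | c ≤ X i ω}) := by
        refine measure_mono fun ω hω => ?_
        by_contra hU
        simp only [Set.mem_iUnion, Set.mem_ofPred_eq, not_exists, not_le] at hU
        refine hω (log_one_add_sum_exp_lt (n := V) (by simpa using y.pos) hη fun i hi => ?_)
        rw [edot_noised_sub_edot]
        exact hU i hi
    _ ≤ ∑ i ∈ univ.erase y, P {ω | c ≤ X i ω} := measure_biUnion_finset_le _ _
    _ ≤ ∑ _i ∈ univ.erase y, ENNReal.ofReal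
          (16 * (12 * gaussianFourthMoment v + 4 * gaussianFourthMoment w) / v ^ 2 / d) :=
        sum_le_sum fun i hi => measure_ge_sum_coordinate_terms_le hv hind he hε ha ha1 hb
          (ne_of_mem_erase hi) hd hc
    _ ≤ _ := by
        rw [sum_const, nsmul_eq_mul, ENNReal.ofReal_mul (by positivity), ENNReal.ofReal_natCast]
        gcongr
        simp

end Model

theorem log_softmax_term_tendsto_zero_in_probability_general
    (σe : ℝ) (hσe : 0 < σe) (V : ℕ) (y : Fin V)
    (η δ : ℝ) (hη : 0 < η) (hδ : 0 < δ) :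
    ∃ βb₀ : ℝ, 0 < βb₀ ∧ ∃ d₀ : ℕ,
      ∀ (βb : ℝ), 0 < βb → βb < βb₀ → βb < 1 →
      ∀ (d : ℕ), d₀ ≤ d →
      ∀ (Ω : Type) (_ : MeasurableSpace Ω) (P : Measure Ω), IsProbabilityMeasure P →
      ∀ (e : Fin V → Ω → Fin d → ℝ) (ε : Ω → Fin d → ℝ),
        (∀ k j, Measurable fun ω => e k ω j) →
        (∀ j, Measurable fun ω => ε ω j) →
        (∀ k j, P.map (fun ω => e k ω j) = gaussianReal 0 (Real.toNNReal (σe ^ 2))) →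
        (∀ j, P.map (fun ω => ε ω j) = gaussianReal 0 1) →
        iIndepFun (m := fun _ => Real.measurableSpace)
          (Sum.elim (fun (p : Fin V × Fin d) (ω : Ω) => e p.1 ω p.2)
            (fun (j : Fin d) (ω : Ω) => ε ω j)) P →
        ENNReal.ofReal (1 - δ) <
          P {ω | Real.log (1 + ∑ i ∈ Finset.univ.erase y,
              Real.exp (edot (noised βb (e y ω) (ε ω)) (e i ω)
                - edot (noised βb (e y ω) (ε ω)) (e y ω))) < η} := by
  set v := (σe ^ 2).toNNReal
  have hv : 0 < (v : ℝ) := by simpa [v] using hσe.ne'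
  set B := 16 * (12 * gaussianFourthMoment v + 4 * gaussianFourthMoment 1) / v ^ 2
  have hB0 : 0 ≤ B := by
    have := gaussianFourthMoment_nonneg v
    have := gaussianFourthMoment_nonneg 1
    positivity
  have hB : Tendsto (fun d : ℕ => V * (B / d)) atTop (𝓝 0) := by
    simpa using (tendsto_const_div_atTop_nhds_zero_nat B).const_mul (V : ℝ)
  have hvd : Tendsto (fun d : ℕ => (v : ℝ) * d / 4) atTop atTop := by
    simpa [mul_div_assoc, mul_comm] using
      tendsto_natCast_atTop_atTop.atTop_mul_const (by positivity : 0 < (v : ℝ) / 4)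
  obtain ⟨d₀, hd₀⟩ := eventually_atTop.1 <|
    (hvd.eventually_ge_atTop (-Real.log ((Real.exp η - 1) / V))).and <|
      (hB.eventually (gt_mem_nhds (lt_min hδ one_pos))).and (eventually_gt_atTop 0)
  refine ⟨3 / 4, by norm_num, d₀,
    fun βb hβ0 hβ _ d hd Ω _ P _ e ε he hε hle hlε hind => ?_⟩
  obtain ⟨hdc, hdB, hd0⟩ := hd₀ d hd
  exact ofReal_one_sub_lt_of_measure_compl_le (by positivity) hdB <|
    measure_log_one_add_sum_exp_ge_le hv hind (fun k j => ⟨(he k j).aemeasurable, hle k j⟩)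
      (fun j => ⟨(hε j).aemeasurable, hlε j⟩) hβ0.le hβ.le hd0 hη (by linarith) y

/-- The log-softmax term of the loss at the true token,
`log(1 + Σ_{i ≠ y} exp(⟪z_t, e_i⟫ − ⟪z_t, e_y⟫))`, vanishes in probability in the joint
limit `β̄ → 0`, `d → ∞`. -/
theorem log_softmax_term_tendsto_zero_in_probability
    (σe : ℝ) (hσe : 0 < σe) (V : ℕ) (hV : 2 ≤ V) (y : Fin V)
    (η δ : ℝ) (hη : 0 < η) (hδ : 0 < δ) :
    ∃ βb₀ : ℝ, 0 < βb₀ ∧ ∃ d₀ : ℕ,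
      ∀ (βb : ℝ), 0 < βb → βb < βb₀ → βb < 1 →
      ∀ (d : ℕ), d₀ ≤ d →
      ∀ (Ω : Type) (_ : MeasurableSpace Ω) (P : Measure Ω), IsProbabilityMeasure P →
      ∀ (e : Fin V → Ω → Fin d → ℝ) (ε : Ω → Fin d → ℝ),
        (∀ k j, Measurable fun ω => e k ω j) →
        (∀ j, Measurable fun ω => ε ω j) →
        (∀ k j, P.map (fun ω => e k ω j) = gaussianReal 0 (Real.toNNReal (σe ^ 2))) →
        (∀ j, P.map (fun ω => ε ω j) = gaussianReal 0 1) →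
        iIndepFun (m := fun _ => Real.measurableSpace)
          (Sum.elim (fun (p : Fin V × Fin d) (ω : Ω) => e p.1 ω p.2)
            (fun (j : Fin d) (ω : Ω) => ε ω j)) P →
        ENNReal.ofReal (1 - δ) <
          P {ω | Real.log (1 + ∑ i ∈ Finset.univ.erase y,
              Real.exp (edot (noised βb (e y ω) (ε ω)) (e i ω)
                - edot (noised βb (e y ω) (ε ω)) (e y ω))) < η} :=
  log_softmax_term_tendsto_zero_in_probability_general σe hσe V y η δ hη hδ
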